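/- Let R be a field of characteristic 0 and X a symmetric simplicial R-module. Define h_n : C_nX → C_{n+1}X by h_n := Σ_{k=0}^n (−1)^k p_{n+1}^(k) ∘ s_k. Then for all n, ∂_{n+1} ∘ h_n + h_{n−1} ∘ ∂_n = id − p_n^(n); that is, h is a chain homotopy between the identity of C_*X and the chain map p_X = (p_n^(n)). -/

import Mathlib

open CategoryTheory Opposite
noncomputable section
variable {R : Type} [Field R] [CharZero R]

/-- The object `Fin m` in the category of finite types. -/
abbrev fobj (m : ℕ) : FintypeCat := FintypeCat.of (Fin m)

variable (X : FintypeCatᵒᵖ ⥤ ModuleCat R)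

/-- The `R`-module `X(Fin m)`; for `m = n+1` this is the module `X_n` of `n`-simplices. -/
abbrev MM (m : ℕ) := X.obj (op (fobj m))

/-- `X` applied (contravariantly) to a map `f : Fin m → Fin k`. -/
def act {m k : ℕ} (f : Fin m → Fin k) : MM X k →ₗ[R] MM X m :=
  (X.map (Quiver.Hom.op (show fobj m ⟶ fobj k from FintypeCat.homMk f))).hom

/-- The face map `d_i : X_n → X_{n-1}`, i.e. `X` applied to `Fin.succAbove i`. -/
def face (n : ℕ) (i : Fin (n + 1)) : MM X (n + 1) →ₗ[R] MM X n :=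
  act X (Fin.succAbove i)

/-- The alternating-sum differential `∂_n : X_n → X_{n-1}`. -/
def del (n : ℕ) : MM X (n + 1) →ₗ[R] MM X n :=
  ∑ i : Fin (n + 1), ((-1 : R) ^ (i : ℕ)) • face X n i

/-- The action of a permutation `t` on `X_n`, `t • x := X(t)(x)`. -/
def pact (m : ℕ) (t : Equiv.Perm (Fin m)) : MM X m →ₗ[R] MM X m :=
  act X (t : Fin m → Fin m)

/-- The sign of a permutation, as an element of `R`. -/
def sgnR (R : Type) [Field R] {m : ℕ} (t : Equiv.Perm (Fin m)) : R :=
  ((Equiv.Perm.sign t : ℤ) : R)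

/-- The subgroup `S_{[k]}` of permutations of `Fin m` fixing every `j > k`, as a finset. -/
def Sk (m k : ℕ) : Finset (Equiv.Perm (Fin m)) :=
  Finset.univ.filter (fun t => ∀ j : Fin m, k < (j : ℕ) → t j = j)

/-- The map `p_{m-1}^{(k)} : X(Fin m) → X(Fin m)`,
`x ↦ (1/(k+1)!) ∑_{t ∈ S_{[k]}} sgn(t) • (t • x)`. -/
def pmap (m k : ℕ) : MM X m →ₗ[R] MM X m :=
  ((Nat.factorial (k + 1) : R)⁻¹) • ∑ t ∈ Sk m k, sgnR R t • pact X m t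

/-- The full projection `p_{m-1}^{(m-1)} : X(Fin m) → X(Fin m)` (averaging over all of
`Perm (Fin m)` with signs). -/
def pfull (m : ℕ) : MM X m →ₗ[R] MM X m :=
  ((Nat.factorial m : R)⁻¹) • ∑ t : Equiv.Perm (Fin m), sgnR R t • pact X m t

/-- The symmetry submodule `sDeg`, spanned by all `x - sgn(t) • (t • x)`. -/
def sDeg (m : ℕ) : Submodule R (MM X m) :=
  Submodule.span R
    {y | ∃ (x : MM X m) (t : Equiv.Perm (Fin m)), y = x - sgnR R t • pact X m t x}

/-- The submodule `P`, spanned by all `∑_t sgn(t) • (t • x)`. -/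
def Psub (m : ℕ) : Submodule R (MM X m) :=
  Submodule.span R
    {y | ∃ x : MM X m, y = ∑ t : Equiv.Perm (Fin m), sgnR R t • pact X m t x}

/-- The degeneracy map `s_k : X(Fin m) → X(Fin (m+1))`, i.e. `X` applied to the monotone
surjection `Fin.predAbove k : Fin (m+1) → Fin m` taking the value `k` twice. -/
def degen (m : ℕ) (k : Fin m) : MM X m →ₗ[R] MM X (m + 1) :=
  act X (fun j : Fin (m + 1) => Fin.predAbove k j)

/-- The chain homotopy `h`, on `X(Fin m)` given by `∑_{k=0}^{m-1} (-1)^k p^{(k)} ∘ s_k`. -/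
def hmap (m : ℕ) : MM X m →ₗ[R] MM X (m + 1) :=
  ∑ k : Fin m, ((-1 : R) ^ (k : ℕ)) • ((pmap X (m + 1) (k : ℕ)) ∘ₗ degen X m k)

end

/-!
Write `Q_k = p^(k)` on `X_{n+1}` and `P_k = p^(k)` on `X_n`. A face `d_i` with `i ≤ k` is
`d_0` followed by the cycle `(0 1 ⋯ i) ∈ S_{[k]}`, which `Q_k` absorbs up to its sign, so
`d_i Q_k = (-1)^i d_0 Q_k`; a face `d_i` with `i > k` commutes past: `d_i Q_k = P_k d_i`. Splitting
`S_{[k+1]}` into the cosets of the stabiliser of `0` shows that the alternating sum of the first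
`k + 2` faces intertwines `Q_{k+1}` with `P_k`. Combined with the simplicial identities for
`d_i s_k`, the `k`-th summand of `∂ h` becomes `W_k - W_{k+1} - (-1)^k P_k s_k ∂`, where
`W_k = (-1)^k (∑_{i ≤ k} (-1)^i d_i) Q_k s_k`, `W_0 = id`, and for `k = n` the missing `W_{n+1}`
is replaced by `P_n = p_n^(n)`. Summing over `k` telescopes to `id - p_n^(n) - h ∂`.
-/

open Finset

lemma LinearMap.comp_finsetSum {R M N P ι : Type*} [Semiring R] [AddCommMonoid M]
    [AddCommMonoid N] [AddCommMonoid P] [Module R M] [Module R N] [Module R P]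
    (f : N →ₗ[R] P) (s : Finset ι) (g : ι → M →ₗ[R] N) :
    f ∘ₗ ∑ i ∈ s, g i = ∑ i ∈ s, f ∘ₗ g i := by
  ext
  simp

lemma LinearMap.finsetSum_comp {R M N P ι : Type*} [Semiring R] [AddCommMonoid M]
    [AddCommMonoid N] [AddCommMonoid P] [Module R M] [Module R N] [Module R P]
    (s : Finset ι) (g : ι → N →ₗ[R] P) (f : M →ₗ[R] N) :
    (∑ i ∈ s, g i) ∘ₗ f = ∑ i ∈ s, g i ∘ₗ f := by
  ext
  simp

lemma Fin.val_succAbove_eq_ite {n : ℕ} (p : Fin (n + 1)) (i : Fin n) :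
    (p.succAbove i : ℕ) = if (i : ℕ) < p then (i : ℕ) else (i : ℕ) + 1 := by
  split_ifs with h
  · rw [Fin.succAbove_of_castSucc_lt _ _ h]; rfl
  · rw [Fin.succAbove_of_le_castSucc _ _ (not_lt.mp h)]; rfl

lemma Fin.val_predAbove_eq_ite {n : ℕ} (p : Fin n) (i : Fin (n + 1)) :
    (p.predAbove i : ℕ) = if (p : ℕ) < i then (i : ℕ) - 1 else (i : ℕ) := by
  split_ifs with h
  · rw [Fin.predAbove_of_castSucc_lt _ _ h, Fin.val_pred]
  · rw [Fin.predAbove_of_le_castSucc _ _ (not_lt.mp h), Fin.coe_castPred]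

def permExtend {k m : ℕ} (h : k ≤ m) : Equiv.Perm (Fin k) →* Equiv.Perm (Fin m) :=
  Equiv.Perm.extendDomainHom (Fin.castLEEmb h).toEquivRange

section
variable {k m : ℕ} (h : k ≤ m) (t : Equiv.Perm (Fin k))

lemma permExtend_injective : Function.Injective (permExtend h) :=
  Equiv.Perm.extendDomainHom_injective _

@[simp]
lemma permExtend_castLE (a : Fin k) : permExtend h t (Fin.castLE h a) = Fin.castLE h (t a) :=
  Equiv.Perm.extendDomain_apply_image t _ a

lemma permExtend_apply_of_le {a : Fin m} (ha : k ≤ (a : ℕ)) : permExtend h t a = a :=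
  Equiv.Perm.extendDomain_apply_not_subtype t _ fun ⟨b, hb⟩ => by
    have := b.is_lt
    simp only [← hb, Fin.castLEEmb_apply, Fin.val_castLE] at ha
    omega

lemma permExtend_comp_succAbove {i : Fin (m + 1)} (hi : k ≤ (i : ℕ)) :
    permExtend (h.trans m.le_succ) t ∘ i.succAbove = i.succAbove ∘ permExtend h t := by
  funext a
  simp only [Function.comp_apply]
  rcases lt_or_ge (a : ℕ) k with ha | ha
  · obtain ⟨b, rfl⟩ : ∃ b, Fin.castLE h b = a := ⟨⟨a, ha⟩, rfl⟩
    have hb : ∀ c : Fin k, i.succAbove (Fin.castLE h c) = Fin.castLE (h.trans m.le_succ) c :=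
      fun c => Fin.ext (by simp [Fin.val_succAbove_eq_ite]; omega)
    rw [hb, permExtend_castLE, permExtend_castLE, hb]
  · have : k ≤ (i.succAbove a : ℕ) := by rw [Fin.val_succAbove_eq_ite]; split_ifs <;> omega
    rw [permExtend_apply_of_le _ _ this, permExtend_apply_of_le _ _ ha]

end

def cycleShift {k : ℕ} (p : Fin (k + 1) × Equiv.Perm (Fin k)) : Equiv.Perm (Fin (k + 1)) :=
  (Fin.cycleRange p.1)⁻¹ * Equiv.Perm.decomposeFin.symm (0, p.2)

section
variable {k : ℕ} (i : Fin (k + 1)) (u : Equiv.Perm (Fin k))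

lemma cycleShift_apply_zero : cycleShift (i, u) 0 = i := by
  simp [cycleShift, Equiv.Perm.inv_def, Equiv.Perm.decomposeFin_symm_apply_zero,
    Fin.cycleRange_symm_zero]

lemma cycleShift_apply_succ (b : Fin k) : cycleShift (i, u) b.succ = i.succAbove (u b) := by
  simp [cycleShift, Equiv.Perm.inv_def, Equiv.Perm.decomposeFin_symm_apply_succ,
    Fin.cycleRange_symm_succ]

lemma permExtend_cycleShift_comp_succ {m : ℕ} (h : k ≤ m) :
    permExtend (Nat.succ_le_succ h) (cycleShift (i, u)) ∘ Fin.succ =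
      (Fin.castLE (Nat.succ_le_succ h) i).succAbove ∘ permExtend h u := by
  funext a
  simp only [Function.comp_apply]
  rcases lt_or_ge (a : ℕ) k with ha | ha
  · obtain ⟨b, rfl⟩ : ∃ b, Fin.castLE h b = a := ⟨⟨a, ha⟩, rfl⟩
    rw [← Fin.castLE_succ (Nat.succ_le_succ h), permExtend_castLE, permExtend_castLE,
      cycleShift_apply_succ]
    ext
    simp [Fin.val_succAbove_eq_ite]
  · rw [permExtend_apply_of_le _ _ (by simpa using ha), permExtend_apply_of_le _ _ ha]
    ext
    simp [Fin.val_succAbove_eq_ite]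
    omega

end

lemma cycleShift_bijective (k : ℕ) :
    Function.Bijective (cycleShift : Fin (k + 1) × Equiv.Perm (Fin k) → _) := by
  refine (Fintype.bijective_iff_injective_and_card _).mpr ⟨?_, ?_⟩
  · rintro ⟨i, u⟩ ⟨j, v⟩ huv
    obtain rfl : i = j := by
      simpa only [cycleShift_apply_zero] using congrArg (· 0) huv
    simpa [cycleShift] using huv
  · simp [Fintype.card_perm, Nat.factorial_succ]

section
variable {R : Type} [Field R]

lemma sgnR_mul {m : ℕ} (s t : Equiv.Perm (Fin m)) : sgnR R (s * t) = sgnR R s * sgnR R t := by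
  simp [sgnR]

lemma sgnR_mul_self {m : ℕ} (t : Equiv.Perm (Fin m)) : sgnR R t * sgnR R t = 1 := by
  rw [← sgnR_mul]
  simp [sgnR]

@[simp]
lemma sgnR_permExtend {k m : ℕ} (h : k ≤ m) (t : Equiv.Perm (Fin k)) :
    sgnR R (permExtend h t) = sgnR R t := by
  simp only [sgnR, permExtend, Equiv.Perm.extendDomainHom_apply, Equiv.Perm.sign_extendDomain]

lemma sgnR_cycleShift {k : ℕ} (i : Fin (k + 1)) (u : Equiv.Perm (Fin k)) :
    sgnR R (cycleShift (i, u)) = (-1 : R) ^ (i : ℕ) * sgnR R u := by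
  simp [sgnR, cycleShift, Fin.sign_cycleRange, Equiv.Perm.decomposeFin.symm_sign]

end

lemma mul_mem_Sk_iff {m k : ℕ} {s t : Equiv.Perm (Fin m)} (ht : t ∈ Sk m k) :
    s * t ∈ Sk m k ↔ s ∈ Sk m k := by
  simp only [Sk, mem_filter, mem_univ, true_and] at ht ⊢
  refine forall_congr' fun j => imp_congr_right fun hj => ?_
  rw [Equiv.Perm.mul_apply, ht j hj]

lemma inv_cycleRange_mem_Sk {m k : ℕ} {i : Fin m} (hik : (i : ℕ) ≤ k) :
    (Fin.cycleRange i)⁻¹ ∈ Sk m k := by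
  simp only [Sk, mem_filter, mem_univ, true_and]
  intro j hj
  rw [Equiv.Perm.inv_eq_iff_eq, Fin.cycleRange_of_gt (Fin.lt_def.mpr (by omega))]

lemma exists_permExtend_eq_of_mem_Sk {m k : ℕ} (h : k + 1 ≤ m) {v : Equiv.Perm (Fin m)}
    (hv : v ∈ Sk m k) : ∃ t, permExtend h t = v := by
  simp only [Sk, mem_filter, mem_univ, true_and] at hv
  have hlt : ∀ a : Fin (k + 1), (v (Fin.castLE h a) : ℕ) < k + 1 := fun a => by
    by_contra hge
    have hfix := v.injective (hv (v (Fin.castLE h a)) (by omega))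
    rw [hfix, Fin.val_castLE] at hge
    exact hge a.is_lt
  let f : Fin (k + 1) → Fin (k + 1) := fun a => ⟨v (Fin.castLE h a), hlt a⟩
  have hf : Function.Injective f := fun a b hab =>
    Fin.castLE_injective h (v.injective (Fin.ext (Fin.mk.inj hab)))
  refine ⟨Equiv.ofBijective f hf.bijective_of_finite, Equiv.ext fun a => ?_⟩
  rcases lt_or_ge (a : ℕ) (k + 1) with ha | ha
  · obtain ⟨b, rfl⟩ : ∃ b, Fin.castLE h b = a := ⟨⟨a, ha⟩, rfl⟩
    rw [permExtend_castLE]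
    rfl
  · rw [permExtend_apply_of_le h _ ha, hv a (by omega)]

lemma Sk_eq_map_permExtend {m k : ℕ} (h : k + 1 ≤ m) :
    Sk m k = univ.map ⟨permExtend h, permExtend_injective h⟩ := by
  ext v
  simp only [mem_map, mem_univ, true_and]
  refine ⟨exists_permExtend_eq_of_mem_Sk h, ?_⟩
  rintro ⟨t, rfl⟩
  simp only [Sk, mem_filter, mem_univ, true_and]
  exact fun j hj => permExtend_apply_of_le h t (by omega)

section
variable {R : Type} [Field R] (X : FintypeCatᵒᵖ ⥤ ModuleCat R)

lemma act_comp_act {a b c : ℕ} (f : Fin a → Fin b) (g : Fin b → Fin c) :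
    act X f ∘ₗ act X g = act X (g ∘ f) := by
  rw [act, act, act, ← ModuleCat.hom_comp, ← X.map_comp]
  rfl

lemma act_id (a : ℕ) : act X (id : Fin a → Fin a) = LinearMap.id := by
  rw [act, show FintypeCat.homMk (id : Fin a → Fin a) = 𝟙 (fobj a) from rfl, op_id, X.map_id]
  rfl

lemma act_congr {a b : ℕ} {f g : Fin a → Fin b} (h : ∀ x, (f x : ℕ) = g x) :
    act X f = act X g :=
  congrArg (act X) (funext fun x => Fin.ext (h x))

lemma pact_mul (m : ℕ) (s t : Equiv.Perm (Fin m)) :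
    pact X m (s * t) = pact X m t ∘ₗ pact X m s := by
  rw [pact, pact, pact, act_comp_act]
  rfl

lemma pact_one (m : ℕ) : pact X m 1 = LinearMap.id :=
  act_id X m

/-- `d_i` and `s_k` indexed by natural numbers and extended by zero out of range, so that sums
of faces can be split and shifted freely. -/
def faceNat (n i : ℕ) : MM X (n + 1) →ₗ[R] MM X n :=
  if h : i < n + 1 then face X n ⟨i, h⟩ else 0

def degenNat (m k : ℕ) : MM X m →ₗ[R] MM X (m + 1) :=
  if h : k < m then degen X m ⟨k, h⟩ else 0

def partialDel (n r : ℕ) : MM X (n + 1) →ₗ[R] MM X n :=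
  ∑ i ∈ range r, (-1 : R) ^ i • faceNat X n i

lemma faceNat_of_lt {n i : ℕ} (h : i < n + 1) : faceNat X n i = face X n ⟨i, h⟩ :=
  dif_pos h

lemma faceNat_of_le {n i : ℕ} (h : n + 1 ≤ i) : faceNat X n i = 0 :=
  dif_neg (by omega)

lemma degenNat_of_lt {m k : ℕ} (h : k < m) : degenNat X m k = degen X m ⟨k, h⟩ :=
  dif_pos h

lemma degenNat_self (m : ℕ) : degenNat X m m = 0 :=
  dif_neg (lt_irrefl m)

lemma del_eq_partialDel (n : ℕ) : del X n = partialDel X n (n + 1) := by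
  rw [del, partialDel, ← Fin.sum_univ_eq_sum_range]
  simp only [faceNat_of_lt X (Fin.is_lt _), Fin.eta]

lemma partialDel_succ (n r : ℕ) :
    partialDel X n (r + 1) = partialDel X n r + (-1 : R) ^ r • faceNat X n r :=
  sum_range_succ _ _

lemma del_sub_partialDel {n r : ℕ} (hr : r ≤ n + 1) :
    del X n - partialDel X n r = ∑ j ∈ Ico r (n + 1), (-1 : R) ^ j • faceNat X n j := by
  rw [del_eq_partialDel, partialDel, partialDel, ← sum_range_add_sum_Ico _ hr, add_sub_cancel_left]

lemma faceNat_comp_degenNat_self {m k : ℕ} (hk : k < m) :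
    faceNat X m k ∘ₗ degenNat X m k = LinearMap.id := by
  rw [faceNat_of_lt X (by omega), degenNat_of_lt X hk, face, degen, act_comp_act, ← act_id X]
  refine act_congr X fun a => ?_
  simp only [Function.comp_apply, id, Fin.val_predAbove_eq_ite, Fin.val_succAbove_eq_ite]
  split_ifs <;> omega

lemma faceNat_succ_comp_degenNat {m k : ℕ} (hk : k < m) :
    faceNat X m (k + 1) ∘ₗ degenNat X m k = LinearMap.id := by
  rw [faceNat_of_lt X (by omega), degenNat_of_lt X hk, face, degen, act_comp_act, ← act_id X]
  refine act_congr X fun a => ?_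
  simp only [Function.comp_apply, id, Fin.val_predAbove_eq_ite, Fin.val_succAbove_eq_ite]
  split_ifs <;> omega

lemma faceNat_succ_comp_degenNat_of_lt {n j k : ℕ} (hkj : k < j) :
    faceNat X (n + 1) (j + 1) ∘ₗ degenNat X (n + 1) k = degenNat X n k ∘ₗ faceNat X n j := by
  rcases lt_or_ge j (n + 1) with hj | hj
  · rw [faceNat_of_lt X (by omega), faceNat_of_lt X hj, degenNat_of_lt X (by omega),
      degenNat_of_lt X (by omega), face, face, degen, degen, act_comp_act, act_comp_act]
    refine act_congr X fun a => ?_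
    simp only [Function.comp_apply, Fin.val_predAbove_eq_ite, Fin.val_succAbove_eq_ite]
    split_ifs <;> omega
  · rw [faceNat_of_le X (by omega), faceNat_of_le X hj, LinearMap.zero_comp, LinearMap.comp_zero]

lemma faceNat_comp_degenNat_succ_of_le {n i k : ℕ} (hik : i ≤ k) :
    faceNat X (n + 1) i ∘ₗ degenNat X (n + 1) (k + 1) = degenNat X n k ∘ₗ faceNat X n i := by
  rcases lt_or_ge k n with hk | hk
  · rw [faceNat_of_lt X (by omega), faceNat_of_lt X (by omega), degenNat_of_lt X (by omega),
      degenNat_of_lt X hk, face, face, degen, degen, act_comp_act, act_comp_act]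
    refine act_congr X fun a => ?_
    simp only [Function.comp_apply, Fin.val_predAbove_eq_ite, Fin.val_succAbove_eq_ite]
    split_ifs <;> omega
  · rw [degenNat, dif_neg (by omega), degenNat, dif_neg (by omega), LinearMap.zero_comp,
      LinearMap.comp_zero]

lemma partialDel_comp_degenNat_succ (n k : ℕ) :
    partialDel X (n + 1) (k + 1) ∘ₗ degenNat X (n + 1) (k + 1) =
      degenNat X n k ∘ₗ partialDel X n (k + 1) := by
  rw [partialDel, partialDel, LinearMap.finsetSum_comp, LinearMap.comp_finsetSum]
  refine sum_congr rfl fun i hi => ?_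
  rw [LinearMap.smul_comp, LinearMap.comp_smul,
    faceNat_comp_degenNat_succ_of_le X (Nat.lt_succ_iff.mp (mem_range.mp hi))]

lemma pact_comp_pmap {m k : ℕ} {c : Equiv.Perm (Fin m)} (hc : c ∈ Sk m k) :
    pact X m c ∘ₗ pmap X m k = sgnR R c • pmap X m k := by
  rw [pmap, LinearMap.comp_smul, smul_comm (sgnR R c)]
  congr 1
  rw [LinearMap.comp_finsetSum, smul_sum]
  refine sum_equiv (Equiv.mulRight c) (fun t => (mul_mem_Sk_iff hc).symm) fun t _ => ?_
  rw [Equiv.coe_mulRight, LinearMap.comp_smul, ← pact_mul, smul_smul, sgnR_mul, mul_left_comm,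
    sgnR_mul_self, mul_one]

lemma pmap_eq_sum_permExtend {m k : ℕ} (h : k + 1 ≤ m) :
    pmap X m k = ((k + 1).factorial : R)⁻¹ •
      ∑ t : Equiv.Perm (Fin (k + 1)), sgnR R t • pact X m (permExtend h t) := by
  rw [pmap, Sk_eq_map_permExtend h, sum_map]
  simp only [Function.Embedding.coeFn_mk, sgnR_permExtend]

lemma pmap_zero {m : ℕ} (h : 1 ≤ m) : pmap X m 0 = LinearMap.id := by
  rw [pmap_eq_sum_permExtend X h, Fintype.sum_subsingleton (ι := Equiv.Perm (Fin 1)) _ 1]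
  simp [sgnR, pact_one]

lemma pfull_eq_pmap (m : ℕ) : pfull X (m + 1) = pmap X (m + 1) m := by
  have : Sk (m + 1) m = univ := eq_univ_of_forall fun t => by
    simp only [Sk, mem_filter, mem_univ, true_and]
    exact fun j hj => absurd j.is_lt (by omega)
  rw [pfull, pmap, this]

lemma face_eq_face_zero_comp_pact {m : ℕ} (i : Fin (m + 1)) :
    face X m i = face X m 0 ∘ₗ pact X (m + 1) (Fin.cycleRange i)⁻¹ := by
  rw [face, face, pact, act_comp_act]
  congr 1
  funext a
  exact (Fin.cycleRange_symm_succ i a).symm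

lemma faceNat_comp_pmap_of_le {m k i : ℕ} (hik : i ≤ k) (him : i ≤ m) :
    faceNat X m i ∘ₗ pmap X (m + 1) k = (-1 : R) ^ i • (faceNat X m 0 ∘ₗ pmap X (m + 1) k) := by
  rw [faceNat_of_lt X (by omega), faceNat_of_lt X (by omega), Fin.zero_eta,
    face_eq_face_zero_comp_pact, LinearMap.comp_assoc,
    pact_comp_pmap X (inv_cycleRange_mem_Sk (by exact hik)), LinearMap.comp_smul]
  simp [sgnR, Fin.sign_cycleRange]

lemma faceNat_comp_pmap_of_lt {m k i : ℕ} (hki : k < i) :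
    faceNat X m i ∘ₗ pmap X (m + 1) k = pmap X m k ∘ₗ faceNat X m i := by
  rcases lt_or_ge i (m + 1) with hi | hi
  · rw [faceNat_of_lt X hi, pmap_eq_sum_permExtend X (by omega : k + 1 ≤ m + 1),
      pmap_eq_sum_permExtend X (by omega : k + 1 ≤ m), LinearMap.comp_smul, LinearMap.smul_comp,
      LinearMap.comp_finsetSum, LinearMap.finsetSum_comp]
    congr 1
    refine sum_congr rfl fun t _ => ?_
    rw [LinearMap.comp_smul, LinearMap.smul_comp, face, pact, pact, act_comp_act, act_comp_act,
      permExtend_comp_succAbove (by omega) t (by exact hki)]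
  · rw [faceNat_of_le X hi, LinearMap.zero_comp, LinearMap.comp_zero]

/-- Reindexing by `cycleShift`: `d_0 ∘ ((0 1 ⋯ i)⁻¹ u)^* = u^* ∘ d_i`. -/
lemma faceNat_zero_comp_sum_permExtend {m k : ℕ} (h : k + 1 ≤ m) :
    faceNat X m 0 ∘ₗ ∑ t : Equiv.Perm (Fin (k + 2)),
        sgnR R t • pact X (m + 1) (permExtend (Nat.succ_le_succ h) t) =
      (∑ u : Equiv.Perm (Fin (k + 1)), sgnR R u • pact X m (permExtend h u)) ∘ₗ
        partialDel X m (k + 2) := by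
  rw [LinearMap.comp_finsetSum, ← Fintype.sum_bijective _ (cycleShift_bijective (k + 1)) _ _
    fun _ => rfl, Fintype.sum_prod_type, partialDel, LinearMap.comp_finsetSum,
    ← Fin.sum_univ_eq_sum_range]
  refine sum_congr rfl fun i _ => ?_
  rw [faceNat_of_lt X (by omega), LinearMap.comp_smul, LinearMap.finsetSum_comp, smul_sum]
  refine sum_congr rfl fun u _ => ?_
  rw [LinearMap.comp_smul, LinearMap.smul_comp, smul_smul, sgnR_cycleShift, mul_comm,
    faceNat_of_lt X (by omega), face, face, pact, pact, act_comp_act, act_comp_act, Fin.zero_eta,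
    Fin.succAbove_zero, permExtend_cycleShift_comp_succ]
  rfl

lemma partialDel_comp_pmap_succ [CharZero R] {m k : ℕ} (h : k + 1 ≤ m) :
    partialDel X m (k + 2) ∘ₗ pmap X (m + 1) (k + 1) = pmap X m k ∘ₗ partialDel X m (k + 2) := by
  have hfaces : partialDel X m (k + 2) ∘ₗ pmap X (m + 1) (k + 1) =
      ((k + 2 : ℕ) : R) • (faceNat X m 0 ∘ₗ pmap X (m + 1) (k + 1)) := by
    rw [partialDel, LinearMap.finsetSum_comp]
    rw [sum_congr rfl fun i hi => by
      rw [LinearMap.smul_comp, faceNat_comp_pmap_of_le X (Nat.lt_succ_iff.mp (mem_range.mp hi))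
        (by have := mem_range.mp hi; omega), smul_smul, ← pow_add, Even.neg_one_pow ⟨i, rfl⟩,
        one_smul]]
    rw [sum_const, card_range, Nat.cast_smul_eq_nsmul]
  rw [hfaces, pmap_eq_sum_permExtend X (Nat.succ_le_succ h), pmap_eq_sum_permExtend X h,
    LinearMap.comp_smul, faceNat_zero_comp_sum_permExtend X h, smul_smul, LinearMap.smul_comp]
  congr 1
  rw [Nat.factorial_succ (k + 1), Nat.cast_mul, mul_inv, ← mul_assoc,
    mul_inv_cancel₀ (Nat.cast_ne_zero.mpr (k + 1).succ_ne_zero), one_mul]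

def homotopyTerm (m k : ℕ) : MM X m →ₗ[R] MM X (m + 1) :=
  (-1 : R) ^ k • (pmap X (m + 1) k ∘ₗ degenNat X m k)

lemma hmap_eq_sum_range (m : ℕ) : hmap X m = ∑ k ∈ range m, homotopyTerm X m k := by
  rw [hmap, ← Fin.sum_univ_eq_sum_range]
  simp only [homotopyTerm, degenNat_of_lt X (Fin.is_lt _), Fin.eta]

lemma homotopyTerm_self (m : ℕ) : homotopyTerm X m m = 0 := by
  rw [homotopyTerm, degenNat_self, LinearMap.comp_zero, smul_zero]

/-- The terms `W_k` through which `∂ ∘ hmap` telescopes. -/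
def lowerFaces (n k : ℕ) : MM X (n + 1) →ₗ[R] MM X (n + 1) :=
  (-1 : R) ^ k • (partialDel X (n + 1) (k + 1) ∘ₗ pmap X (n + 2) k ∘ₗ degenNat X (n + 1) k)

lemma lowerFaces_zero (n : ℕ) : lowerFaces X n 0 = LinearMap.id := by
  rw [lowerFaces, pow_zero, one_smul, zero_add, partialDel_succ, partialDel, sum_range_zero,
    zero_add, pow_zero, one_smul, pmap_zero X (by omega), LinearMap.id_comp,
    faceNat_comp_degenNat_self X (by omega)]

lemma lowerFaces_succ [CharZero R] {n k : ℕ} (hk : k < n) :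
    lowerFaces X n (k + 1) = pmap X (n + 1) k - homotopyTerm X n k ∘ₗ partialDel X n (k + 1) := by
  have hdegen : partialDel X (n + 1) (k + 2) ∘ₗ degenNat X (n + 1) (k + 1) =
      degenNat X n k ∘ₗ partialDel X n (k + 1) + (-1 : R) ^ (k + 1) • LinearMap.id := by
    rw [partialDel_succ, LinearMap.add_comp, LinearMap.smul_comp, partialDel_comp_degenNat_succ,
      faceNat_comp_degenNat_self X (by omega)]
  rw [lowerFaces, ← LinearMap.comp_assoc, partialDel_comp_pmap_succ X (by omega),
    LinearMap.comp_assoc, hdegen, LinearMap.comp_add, LinearMap.comp_smul, LinearMap.comp_id,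
    smul_add, smul_smul, ← pow_add, Even.neg_one_pow ⟨k + 1, rfl⟩, one_smul, homotopyTerm,
    LinearMap.smul_comp, pow_succ, mul_neg_one, neg_smul, LinearMap.comp_assoc]
  abel

lemma upperFaces_comp_pmap_comp_degenNat {n k : ℕ} (hk : k ≤ n) :
    (del X (n + 1) - partialDel X (n + 1) (k + 1)) ∘ₗ pmap X (n + 2) k ∘ₗ degenNat X (n + 1) k =
      (-1 : R) ^ (k + 1) • pmap X (n + 1) k -
        pmap X (n + 1) k ∘ₗ degenNat X n k ∘ₗ (del X n - partialDel X n (k + 1)) := by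
  rw [del_sub_partialDel X (by omega), del_sub_partialDel X (by omega),
    sum_eq_sum_Ico_succ_bot (by omega), ← sum_Ico_add', LinearMap.add_comp,
    LinearMap.finsetSum_comp, LinearMap.comp_finsetSum, LinearMap.comp_finsetSum, sub_eq_add_neg,
    ← sum_neg_distrib, LinearMap.smul_comp, ← LinearMap.comp_assoc,
    faceNat_comp_pmap_of_lt X k.lt_succ_self, LinearMap.comp_assoc,
    faceNat_succ_comp_degenNat X (by omega), LinearMap.comp_id]
  congr 1
  refine sum_congr rfl fun j hj => ?_
  have hkj : k < j := (mem_Ico.mp hj).1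
  rw [LinearMap.smul_comp, ← LinearMap.comp_assoc, faceNat_comp_pmap_of_lt X (by omega),
    LinearMap.comp_assoc, faceNat_succ_comp_degenNat_of_lt X hkj, LinearMap.comp_smul,
    LinearMap.comp_smul, pow_succ, mul_neg_one, neg_smul]

lemma del_comp_homotopyTerm {n k : ℕ} (hk : k ≤ n) :
    del X (n + 1) ∘ₗ homotopyTerm X (n + 1) k = lowerFaces X n k - pmap X (n + 1) k -
      homotopyTerm X n k ∘ₗ (del X n - partialDel X n (k + 1)) := by
  have hsplit := upperFaces_comp_pmap_comp_degenNat X hk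
  rw [LinearMap.sub_comp, sub_eq_iff_eq_add] at hsplit
  rw [homotopyTerm, LinearMap.comp_smul, hsplit, lowerFaces, homotopyTerm, smul_add, smul_sub,
    smul_smul, ← pow_add, ← add_assoc, pow_succ, Even.neg_one_pow ⟨k, rfl⟩, one_mul, neg_one_smul,
    LinearMap.smul_comp, LinearMap.comp_assoc]
  abel

end

theorem stmt6 {R : Type} [Field R] [CharZero R] (X : FintypeCatᵒᵖ ⥤ ModuleCat R) :
    ∀ n : ℕ,
      (del X (n + 1)) ∘ₗ (hmap X (n + 1)) + (hmap X n) ∘ₗ (del X n) =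
        LinearMap.id - pfull X (n + 1) := by
  intro n
  have hstep : ∀ k ∈ range n, del X (n + 1) ∘ₗ homotopyTerm X (n + 1) k =
      (lowerFaces X n k - lowerFaces X n (k + 1)) - homotopyTerm X n k ∘ₗ del X n := fun k hk => by
    rw [del_comp_homotopyTerm X (mem_range.mp hk).le,
      lowerFaces_succ X (mem_range.mp hk), LinearMap.comp_sub]
    abel
  rw [hmap_eq_sum_range, hmap_eq_sum_range, LinearMap.comp_finsetSum, LinearMap.finsetSum_comp,
    sum_range_succ, sum_congr rfl hstep, sum_sub_distrib, sum_range_sub',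
    del_comp_homotopyTerm X le_rfl, homotopyTerm_self, LinearMap.zero_comp, lowerFaces_zero,
    pfull_eq_pmap]
  abel
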